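/- arXiv:1409.7542 — 5 statements merged into one kernel-verified Lean document; each statement's English description precedes it below -/
import Mathlib

section
/- Let R and S be event structures and p : C(R) → C(S) a function with p(∅) = ∅ that preserves the covering relation (whenever x —⊂ e, there is e' ∉ p(x) with p(x ∪ {e}) = p(x) ∪ {e'} and p(x) —⊂ e') and preserves bounded unions (for compatible x, y ∈ C(R), p(x ∪ y) = p(x) ∪ p(y)). Then there is a unique total map of event structures p̂ : R → S such that p̂(x) = p(x) for all x ∈ C(R). -/
set_option autoImplicit false
set_option maxHeartbeats 1000000

universe u

/-- An event structure. -/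
structure ES (E : Type u) where
  le : E → E → Prop
  le_refl : ∀ e, le e e
  le_trans : ∀ {a b c}, le a b → le b c → le a c
  le_antisymm : ∀ {a b}, le a b → le b a → a = b
  Con : Set (Set E)
  con_empty : (∅ : Set E) ∈ Con
  causes_finite : ∀ e, {e' | le e' e}.Finite
  con_finite : ∀ X ∈ Con, Set.Finite X
  con_singleton : ∀ e, ({e} : Set E) ∈ Con
  con_mono : ∀ {X Y : Set E}, Y ⊆ X → X ∈ Con → Y ∈ Con
  con_extend : ∀ {X : Set E} {e e' : E}, X ∈ Con → le e e' → e' ∈ X → X ∪ {e} ∈ Con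

variable {E F G H : Type u}

/-- Configurations: finite (via `Con`), consistent, down-closed subsets. -/
def Config (A : ES E) (x : Set E) : Prop :=
  x ∈ A.Con ∧ ∀ ⦃e : E⦄, e ∈ x → ∀ ⦃e' : E⦄, A.le e' e → e' ∈ x

/-- Covering: `x —⊂ e`. -/
def Cov (A : ES E) (x : Set E) (e : E) : Prop :=
  Config A x ∧ e ∉ x ∧ Config A (insert e x)

def ESlt (A : ES E) (e e' : E) : Prop := A.le e e' ∧ e ≠ e'

/-- Immediate causality `e ⋖ e'`. -/
def Imm (A : ES E) (e e' : E) : Prop :=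
  ESlt A e e' ∧ ∀ e'', ESlt A e e'' → ESlt A e'' e' → False

/-- Total maps of event structures. -/
def IsMap (A : ES E) (B : ES F) (f : E → F) : Prop :=
  (∀ x, Config A x → Config B (f '' x)) ∧
  (∀ x, Config A x → ∀ e ∈ x, ∀ e' ∈ x, f e = f e' → e = e')

def Rigid (A : ES E) (B : ES F) (f : E → F) : Prop :=
  IsMap A B f ∧ ∀ e e', A.le e e' → B.le (f e) (f e')

def OpenMap (A : ES E) (B : ES F) (f : E → F) : Prop :=
  Rigid A B f ∧ ∀ x y, Config A x → Config B y → f '' x ⊆ y →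
    ∃ x', Config A x' ∧ x ⊆ x' ∧ f '' x' = y

def ConflictFree (A : ES E) : Prop := ∀ X : Set E, X.Finite → X ∈ A.Con

def IsMinimal (A : ES E) (e : E) : Prop := ∀ e', A.le e' e → e' = e

/-- Event structures with polarities; `true` is Player/positive, `false` is Opponent/negative. -/
structure ESP (E : Type u) extends ES E where
  pol : E → Bool

def ESP.dual (A : ESP E) : ESP E := { toES := A.toES, pol := fun e => !A.pol e }

def IsESPMap (A : ESP E) (B : ESP F) (f : E → F) : Prop :=
  IsMap A.toES B.toES f ∧ ∀ e, B.pol (f e) = A.pol e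

def NegativeESP (A : ESP E) : Prop := ∀ e, IsMinimal A.toES e → A.pol e = false

/-- Single-threaded event structures. -/
def SingleThreaded (A : ES E) : Prop :=
  (∀ e, ∃! m, A.le m e ∧ IsMinimal A m) ∧
  (∀ x e₁ e₂, Cov A x e₁ → Cov A x e₂ → ¬ Config A (insert e₁ (insert e₂ x)) →
    ∃ m, A.le m e₁ ∧ A.le m e₂)

/- ## Relations as bijections between configurations -/

abbrev Rel2 (E : Type u) := Set (E × E)

def rdom (θ : Rel2 E) : Set E := Prod.fst '' θ
def rran (θ : Rel2 E) : Set E := Prod.snd '' θ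
def relBij (θ : Rel2 E) : Prop := ∀ p ∈ θ, ∀ q ∈ θ, (p.1 = q.1 ↔ p.2 = q.2)
def relId (x : Set E) : Rel2 E := (fun e => (e, e)) '' x
def relInv (θ : Rel2 E) : Rel2 E := Prod.swap '' θ
def relComp (θ θ' : Rel2 E) : Rel2 E := {p | ∃ b, (p.1, b) ∈ θ ∧ (b, p.2) ∈ θ'}
def relRestrict (θ : Rel2 E) (x : Set E) : Rel2 E := {p ∈ θ | p.1 ∈ x}
def relMap (f : E → F) (θ : Rel2 E) : Rel2 F := (Prod.map f f) '' θ

/-- Isomorphism families (without the polarity requirement). -/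
def IsIsoFamily (A : ES E) (S : Set (Rel2 E)) : Prop :=
  (∀ θ ∈ S, relBij θ ∧ Config A (rdom θ) ∧ Config A (rran θ)) ∧
  (∀ x, Config A x → relId x ∈ S) ∧
  (∀ θ ∈ S, relInv θ ∈ S) ∧
  (∀ θ ∈ S, ∀ θ' ∈ S, rran θ = rdom θ' → relComp θ θ' ∈ S) ∧
  (∀ θ ∈ S, ∀ x, Config A x → x ⊆ rdom θ → relRestrict θ x ∈ S) ∧
  (∀ θ ∈ S, ∀ x', Config A x' → rdom θ ⊆ x' → ∃ θ' ∈ S, θ ⊆ θ' ∧ rdom θ' = x')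

/-- The members of the family are polarity-preserving. -/
def PolPres (A : ESP E) (S : Set (Rel2 E)) : Prop :=
  ∀ θ ∈ S, ∀ p ∈ θ, A.pol p.1 = A.pol p.2

def FamPres (SA : Set (Rel2 E)) (SB : Set (Rel2 F)) (f : E → F) : Prop :=
  ∀ θ ∈ SA, relMap f θ ∈ SB

/-- `f ∼ g` : the two maps are symmetric. -/
def SymMaps (A : ES E) (SB : Set (Rel2 F)) (f g : E → F) : Prop :=
  ∀ x, Config A x → {p : F × F | ∃ a ∈ x, p = (f a, g a)} ∈ SB

/-- `θ ⊆⁺ θ'`. -/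
def PosRelExt (A : ESP E) (θ θ' : Rel2 E) : Prop :=
  θ ⊆ θ' ∧ ∀ p ∈ θ', p ∉ θ → A.pol p.1 = true ∧ A.pol p.2 = true

/-- `θ ⊆⁻ θ'`. -/
def NegRelExt (A : ESP E) (θ θ' : Rel2 E) : Prop :=
  θ ⊆ θ' ∧ ∀ p ∈ θ', p ∉ θ → A.pol p.1 = false ∧ A.pol p.2 = false

/-- `x ⊆⁺ x'` for configurations. -/
def PosSetExt (A : ESP E) (x x' : Set E) : Prop :=
  x ⊆ x' ∧ ∀ e ∈ x', e ∉ x → A.pol e = true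

def Courteous (S : ESP E) (A : ESP F) (σ : E → F) : Prop :=
  ∀ s₁ s₂, Imm S.toES s₁ s₂ → (S.pol s₁ = true ∨ S.pol s₂ = false) →
    Imm A.toES (σ s₁) (σ s₂)

def Receptive (S : ESP E) (A : ESP F) (σ : E → F) : Prop :=
  ∀ x a, Config S.toES x → Cov A.toES (σ '' x) a → A.pol a = false →
    ∃! s, Cov S.toES x s ∧ σ s = a

def StrongReceptive (S : ESP E) (SS : Set (Rel2 E)) (A : ESP F) (SA : Set (Rel2 F))
    (σ : E → F) : Prop :=
  ∀ θ ∈ SS, ∀ a₁ a₂ : F, A.pol a₁ = false → A.pol a₂ = false →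
    (a₁, a₂) ∉ relMap σ θ → insert (a₁, a₂) (relMap σ θ) ∈ SA →
    ∃! st : E × E, insert st θ ∈ SS ∧ σ st.1 = a₁ ∧ σ st.2 = a₂

/-- Thin: two positive compatible extensions of a member of the family are compatible. -/
def ThinFam (A : ESP E) (S : Set (Rel2 E)) : Prop :=
  ∀ θ ∈ S, ∀ θ₁ ∈ S, ∀ θ₂ ∈ S, PosRelExt A θ θ₁ → PosRelExt A θ θ₂ →
    Config A.toES (rdom θ₁ ∪ rdom θ₂) → θ₁ ∪ θ₂ ∈ S

/-- Race-preserving essp (family-level). -/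
def RacePresFam (A : ESP E) (S : Set (Rel2 E)) : Prop :=
  ∀ θ ∈ S, ∀ θ₁ ∈ S, ∀ θ₂ ∈ S, PosRelExt A θ θ₁ → NegRelExt A θ θ₂ →
    Config A.toES (rdom θ₁ ∪ rdom θ₂) → θ₁ ∪ θ₂ ∈ S

/-- Existence of receptive thin sub-symmetries of `A` and of `A^⊥`. -/
def HasThinReceptiveSubs (A : ESP E) (SA : Set (Rel2 E)) : Prop :=
  (∃ Sp ⊆ SA, IsIsoFamily A.toES Sp ∧
    (∀ θ ∈ Sp, ∀ θ' ∈ SA, NegRelExt A θ θ' → θ' ∈ Sp) ∧ ThinFam A Sp) ∧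
  (∃ Sm ⊆ SA, IsIsoFamily A.toES Sm ∧
    (∀ θ ∈ Sm, ∀ θ' ∈ SA, NegRelExt A.dual θ θ' → θ' ∈ Sm) ∧ ThinFam A.dual Sm)

/-- Thin concurrent games (family-level presentation). -/
def IsTCG (A : ESP E) (SA : Set (Rel2 E)) : Prop :=
  IsIsoFamily A.toES SA ∧ PolPres A SA ∧ RacePresFam A SA ∧ HasThinReceptiveSubs A SA

/-- ∼-strategies. -/
def IsSimStrategy (S : ESP E) (SS : Set (Rel2 E)) (A : ESP F) (SA : Set (Rel2 F))
    (σ : E → F) : Prop :=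
  IsESPMap S A σ ∧ FamPres SS SA σ ∧ IsIsoFamily S.toES SS ∧ PolPres S SS ∧
  Courteous S A σ ∧ StrongReceptive S SS A SA σ ∧ ThinFam S SS

/-- Weak equivalence of ∼-strategies on a common essp. -/
def WeakEquiv {S T GE : Type u} (PS : ESP S) (SS : Set (Rel2 S)) (PT : ESP T)
    (ST : Set (Rel2 T)) (SG : Set (Rel2 GE)) (σ : S → GE) (τ : T → GE) : Prop :=
  ∃ f : S → T, ∃ g : T → S,
    IsESPMap PS PT f ∧ FamPres SS ST f ∧ IsESPMap PT PS g ∧ FamPres ST SS g ∧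
    SymMaps PT.toES ST (f ∘ g) id ∧ SymMaps PS.toES SS (g ∘ f) id ∧
    SymMaps PS.toES SG (τ ∘ f) σ ∧ SymMaps PT.toES SG (σ ∘ g) τ

/- ## Stable families, primes, products, pullbacks -/

def FamLe (Fam : Set (Set E)) (x : Set E) (e e' : E) : Prop :=
  ∀ y ∈ Fam, y ⊆ x → e' ∈ y → e ∈ y

def FamPrime (Fam : Set (Set E)) (x : Set E) (e : E) : Set E :=
  {e' ∈ x | FamLe Fam x e' e}

def IsPrime (Fam : Set (Set E)) (p : Set E) : Prop :=
  ∃ x ∈ Fam, ∃ e ∈ x, p = FamPrime Fam x e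

/-- `e` is the generating (top) event of the prime `p`. -/
def PrRep (Fam : Set (Set E)) (p : Set E) (e : E) : Prop :=
  ∃ x ∈ Fam, e ∈ x ∧ p = FamPrime Fam x e

def PrimeLt (p q : Set E) : Prop := p ⊆ q ∧ p ≠ q

/-- Immediate causality in `Pr(Fam)`. -/
def PrImm (Fam : Set (Set E)) (p q : Set E) : Prop :=
  IsPrime Fam p ∧ IsPrime Fam q ∧ PrimeLt p q ∧
  ∀ r, IsPrime Fam r → PrimeLt p r → PrimeLt r q → False

/-- Configurations of `Pr(Fam)`. -/
def PrConfig (Fam : Set (Set E)) (z : Set (Set E)) : Prop :=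
  z.Finite ∧ (∀ p ∈ z, IsPrime Fam p) ∧
  (∀ p ∈ z, ∀ q, IsPrime Fam q → q ⊆ p → q ∈ z) ∧ ⋃₀ z ∈ Fam

/-- The product stable family `C(A) × C(B)`. -/
def ProdFam (A : ES E) (B : ES F) : Set (Set (E × F)) :=
  {x | x.Finite ∧ Config A (Prod.fst '' x) ∧ Config B (Prod.snd '' x) ∧
    (∀ p ∈ x, ∀ q ∈ x, p.1 = q.1 → p = q) ∧
    (∀ p ∈ x, ∀ q ∈ x, p.2 = q.2 → p = q) ∧
    (∀ p ∈ x, ∀ q ∈ x, p ≠ q → ∃ y ⊆ x,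
      Config A (Prod.fst '' y) ∧ Config B (Prod.snd '' y) ∧ (p ∈ y ↔ q ∉ y))}

/-- The stable family `(C(A) × C(B)) ↾ R` defining the pullback `A ⊛ B` of `f` and `g`. -/
def PbFam (A : ES E) (B : ES F) (f : E → G) (g : F → G) : Set (Set (E × F)) :=
  {x | x ∈ ProdFam A B ∧ ∀ p ∈ x, f p.1 = g p.2}

/- ## Secured bijections -/

def SecStep (A : ES E) (B : ES F) (θ : Set (E × F)) (p q : E × F) : Prop :=
  p ∈ θ ∧ q ∈ θ ∧ (A.le p.1 q.1 ∨ B.le p.2 q.2)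

def SecuredBij (A : ES E) (B : ES F) (f : E → G) (g : F → G) (θ : Set (E × F)) : Prop :=
  Config A (Prod.fst '' θ) ∧ Config B (Prod.snd '' θ) ∧
  (∀ p ∈ θ, ∀ q ∈ θ, (p.1 = q.1 ↔ p.2 = q.2)) ∧
  (∀ p ∈ θ, f p.1 = g p.2) ∧
  (∀ p q, Relation.TransGen (SecStep A B θ) p q → Relation.TransGen (SecStep A B θ) q p → p = q)

/- ## Parallel composition -/

def IsParES (A : ES E) (B : ES F) (P : ES (E ⊕ F)) : Prop :=
  (∀ e e', P.le e e' ↔ Sum.LiftRel A.le B.le e e') ∧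
  (∀ X, X ∈ P.Con ↔ X.Finite ∧ (Sum.inl ⁻¹' X) ∈ A.Con ∧ (Sum.inr ⁻¹' X) ∈ B.Con)

def IsParESP (A : ESP E) (B : ESP F) (P : ESP (E ⊕ F)) : Prop :=
  IsParES A.toES B.toES P.toES ∧
  (∀ a, P.pol (Sum.inl a) = A.pol a) ∧ (∀ b, P.pol (Sum.inr b) = B.pol b)

def parFam (SA : Set (Rel2 E)) (SB : Set (Rel2 F)) : Set (Rel2 (E ⊕ F)) :=
  {θ | ∃ θA ∈ SA, ∃ θB ∈ SB, θ = relMap Sum.inl θA ∪ relMap Sum.inr θB}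

/- ## Copycat -/

def ccPol (A : ESP E) (p : Bool × E) : Bool := cond p.1 (A.pol p.2) (!A.pol p.2)

def ccBase (A : ESP E) (p q : Bool × E) : Prop :=
  (p.1 = q.1 ∧ A.le p.2 q.2) ∨ (p.2 = q.2 ∧ p.1 ≠ q.1 ∧ ccPol A q = true)

def ccLe (A : ESP E) : Bool × E → Bool × E → Prop := Relation.ReflTransGen (ccBase A)

def ccDcl (A : ESP E) (X : Set (Bool × E)) : Set (Bool × E) := {p | ∃ q ∈ X, ccLe A p q}

def IsCopycatOf (A : ESP E) (CA : ESP (Bool × E)) : Prop :=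
  (∀ p q, CA.le p q ↔ ccLe A p q) ∧
  (∀ X, X ∈ CA.Con ↔ X.Finite ∧
    {a | (false, a) ∈ ccDcl A X} ∈ A.Con ∧ {a | (true, a) ∈ ccDcl A X} ∈ A.Con) ∧
  (∀ p, CA.pol p = ccPol A p)

def ccMap (f : E → F) : Bool × E → Bool × F := Prod.map id f

def ccToGame : Bool × E → E ⊕ E := fun p => cond p.1 (Sum.inr p.2) (Sum.inl p.2)

/- ## Symmetry presented as spans -/

def famOf (Et : ES F) (l r : F → E) : Set (Rel2 E) :=
  {θ | ∃ x, Config Et x ∧ θ = {p | ∃ aa ∈ x, p = (l aa, r aa)}}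

def IsSymSpanES (A : ES E) (Et : ES F) (l r : F → E) : Prop :=
  OpenMap Et A l ∧ OpenMap Et A r ∧
  (∀ aa aa', l aa = l aa' → r aa = r aa' → aa = aa') ∧
  (∀ x, Config A x → relId x ∈ famOf Et l r) ∧
  (∀ θ ∈ famOf Et l r, relInv θ ∈ famOf Et l r) ∧
  (∀ θ ∈ famOf Et l r, ∀ θ' ∈ famOf Et l r, rran θ = rdom θ' → relComp θ θ' ∈ famOf Et l r)

def IsSymSpanESP (A : ESP E) (Et : ESP F) (l r : F → E) : Prop :=
  IsSymSpanES A.toES Et.toES l r ∧ IsESPMap Et A l ∧ IsESPMap Et A r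

def MapPresRaces (S : ESP E) (A : ESP F) (f : E → F) : Prop :=
  ∀ x e₁ e₂, Cov S.toES x e₁ → Cov S.toES x e₂ →
    S.pol e₁ = false → S.pol e₂ = true →
    ¬ Config S.toES (insert e₁ (insert e₂ x)) →
    ¬ Config A.toES (insert (f e₁) (insert (f e₂) (f '' x)))

def ReflPosCompat (St : ESP F) (S : ES E) (l : F → E) : Prop :=
  ∀ x x₁ x₂, Config St.toES x → Config St.toES x₁ → Config St.toES x₂ →
    x ⊆ x₁ → x ⊆ x₂ →
    (∀ e ∈ x₁, e ∉ x → St.pol e = true) → (∀ e ∈ x₂, e ∉ x → St.pol e = true) →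
    Config S (l '' x₁ ∪ l '' x₂) → Config St.toES (x₁ ∪ x₂)

/- ## Higher symmetry -/

/-- The higher isomorphism family of an essp given by its family `SA`, at the level of
pairs of events: members correspond to commuting squares `φ' ∘ θ = θ' ∘ φ`. -/
def HigherFam (SA : Set (Rel2 E)) : Set (Rel2 (E × E)) :=
  {Φ | ∃ θ ∈ SA, ∃ θ' ∈ SA, ∃ φ ∈ SA, ∃ φ' ∈ SA,
    rdom φ = rdom θ ∧ rdom φ' = rran θ ∧ rran φ = rdom θ' ∧ rran φ' = rran θ' ∧
    (∀ a b c d, (a, b) ∈ θ → (a, c) ∈ φ → (b, d) ∈ φ' → (c, d) ∈ θ') ∧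
    Φ = {P | ∃ a b c d, (a, b) ∈ θ ∧ (a, c) ∈ φ ∧ (b, d) ∈ φ' ∧ P = ((a, b), (c, d))}}

/-- The higher isomorphism family, transported to the events of `Ã = Pr(SA)`,
i.e. primes of the stable family `SA`. -/
def LiftFam (SA : Set (Rel2 E)) : Set (Rel2 {p : Rel2 E // IsPrime SA p}) :=
  {Θ | ∃ θ ∈ SA, ∃ θ' ∈ SA, ∃ φ ∈ SA, ∃ φ' ∈ SA,
    rdom φ = rdom θ ∧ rdom φ' = rran θ ∧ rran φ = rdom θ' ∧ rran φ' = rran θ' ∧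
    (∀ a b c d, (a, b) ∈ θ → (a, c) ∈ φ → (b, d) ∈ φ' → (c, d) ∈ θ') ∧
    Θ = {P | ∃ a b c d, (a, b) ∈ θ ∧ (a, c) ∈ φ ∧ (b, d) ∈ φ' ∧
          P.1.1 = FamPrime SA θ (a, b) ∧ P.2.1 = FamPrime SA θ' (c, d)}}

/- ## Pullbacks as universal properties -/

def IsPullbackES {A B C P : Type u} (EP : ES P) (EA : ES A) (EB : ES B) (EC : ES C)
    (Pi1 : P → A) (Pi2 : P → B) (f : A → C) (g : B → C) : Prop :=
  IsMap EP EA Pi1 ∧ IsMap EP EB Pi2 ∧ f ∘ Pi1 = g ∘ Pi2 ∧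
  ∀ {X : Type u} (EX : ES X) (h₁ : X → A) (h₂ : X → B),
    IsMap EX EA h₁ → IsMap EX EB h₂ → f ∘ h₁ = g ∘ h₂ →
    ∃! h : X → P, IsMap EX EP h ∧ Pi1 ∘ h = h₁ ∧ Pi2 ∘ h = h₂

def IsPullbackESP {A B C P : Type u} (EP : ESP P) (EA : ESP A) (EB : ESP B) (EC : ESP C)
    (Pi1 : P → A) (Pi2 : P → B) (f : A → C) (g : B → C) : Prop :=
  IsESPMap EP EA Pi1 ∧ IsESPMap EP EB Pi2 ∧ f ∘ Pi1 = g ∘ Pi2 ∧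
  ∀ {X : Type u} (EX : ESP X) (h₁ : X → A) (h₂ : X → B),
    IsESPMap EX EA h₁ → IsESPMap EX EB h₂ → f ∘ h₁ = g ∘ h₂ →
    ∃! h : X → P, IsESPMap EX EP h ∧ Pi1 ∘ h = h₁ ∧ Pi2 ∘ h = h₂

/- ## Composition of strategies -/

def compLeft {S GA GB GC : Type u} (σ : S → GA ⊕ GB) : S ⊕ GC → (GA ⊕ GB) ⊕ GC :=
  Sum.map σ id

def compRight {T GA GB GC : Type u} (τ : T → GB ⊕ GC) : GA ⊕ T → (GA ⊕ GB) ⊕ GC :=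
  Sum.elim (fun a => Sum.inl (Sum.inl a))
    (fun t => Sum.elim (fun b => Sum.inl (Sum.inr b)) (fun c => Sum.inr c) (τ t))

def outAC {A B C : Type u} : (A ⊕ B) ⊕ C → Option (A ⊕ C) :=
  Sum.elim (Sum.elim (fun a => some (Sum.inl a)) (fun _ => none)) (fun c => some (Sum.inr c))

/-- Visible events of the interaction. -/
def VisE {S T GA GB GC : Type u} (σ : S → GA ⊕ GB) (e : (S ⊕ GC) × (GA ⊕ T)) : Prop :=
  (outAC (compLeft σ e.1)).isSome = true

/-- Visible primes of the interaction. -/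
def VisP {S T GA GB GC : Type u} (Fam : Set (Set ((S ⊕ GC) × (GA ⊕ T))))
    (σ : S → GA ⊕ GB) (p : Set ((S ⊕ GC) × (GA ⊕ T))) : Prop :=
  ∃ e, PrRep Fam p e ∧ VisE σ e

/-- The underlying relation of a bijection between configurations of `Pr(Fam)`. -/
def relUnder {P : Type u} (Fam : Set (Set P)) (Θ : Rel2 (Set P)) :
    Rel2 P :=
  {ee | ∃ pq ∈ Θ, PrRep Fam pq.1 ee.1 ∧ PrRep Fam pq.2 ee.2}

/-- The isomorphism family of the pullback `Pr(Fam)` of two ∼-strategies,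
characterised via the projections. -/
def PbSymFam {A B : Type u} (Fam : Set (Set (A × B))) (S1 : Set (Rel2 A))
    (S2 : Set (Rel2 B)) : Set (Rel2 (Set (A × B))) :=
  {Θ | relBij Θ ∧ PrConfig Fam (rdom Θ) ∧ PrConfig Fam (rran Θ) ∧
    relMap Prod.fst (relUnder Fam Θ) ∈ S1 ∧ relMap Prod.snd (relUnder Fam Θ) ∈ S2}

/-- A witness for the concrete composition `τ ⊙ σ` of strategies. -/
structure CompWitness {S T GA GB GC : Type u} (PS : ESP S) (PT : ESP T)
    (PA : ESP GA) (PC : ESP GC) (σ : S → GA ⊕ GB) (τ : T → GB ⊕ GC) where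
  L : ES (S ⊕ GC)
  R : ES (GA ⊕ T)
  hL : IsParES PS.toES PC.toES L
  hR : IsParES PA.toES PT.toES R
  Comp : ESP {p : Set ((S ⊕ GC) × (GA ⊕ T)) //
    VisP (PbFam L R (compLeft σ) (compRight τ)) σ p}
  hle : ∀ p q, Comp.le p q ↔ p.1 ⊆ q.1
  hcon : ∀ X, X ∈ Comp.Con ↔
    X.Finite ∧ ⋃₀ (Subtype.val '' X) ∈ PbFam L R (compLeft σ) (compRight τ)
  co : {p : Set ((S ⊕ GC) × (GA ⊕ T)) //
    VisP (PbFam L R (compLeft σ) (compRight τ)) σ p} → GA ⊕ GC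
  hco : ∀ p e, PrRep (PbFam L R (compLeft σ) (compRight τ)) p.1 e →
    outAC (compLeft σ e.1) = some (co p)
  hpol : ∀ p, Comp.pol p = Sum.elim (fun a => !PA.pol a) (fun c => PC.pol c) (co p)

/-- The isomorphism family of the composition: restriction to visible primes of the
family of the interaction. -/
def cfam {S T GA GB GC : Type u} {PS : ESP S} {PT : ESP T} {PA : ESP GA} {PC : ESP GC}
    {σ : S → GA ⊕ GB} {τ : T → GB ⊕ GC}
    (SS : Set (Rel2 S)) (ST : Set (Rel2 T)) (SA : Set (Rel2 GA)) (SC : Set (Rel2 GC))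
    (w : CompWitness PS PT PA PC σ τ) :
    Set (Rel2 {p : Set ((S ⊕ GC) × (GA ⊕ T)) //
      VisP (PbFam w.L w.R (compLeft σ) (compRight τ)) σ p}) :=
  {Θ | ∃ Φ ∈ PbSymFam (PbFam w.L w.R (compLeft σ) (compRight τ))
      (parFam SS SC) (parFam SA ST),
    relMap Subtype.val Θ =
      {pq ∈ Φ | VisP (PbFam w.L w.R (compLeft σ) (compRight τ)) σ pq.1 ∧
                VisP (PbFam w.L w.R (compLeft σ) (compRight τ)) σ pq.2}}
/-- Mapification. -/
theorem statement1 {R S : Type u} (ER : ES R) (ES' : ES S) (p : Set R → Set S)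
    (hp : ∀ x, Config ER x → Config ES' (p x))
    (hempty : p ∅ = ∅)
    (hcov : ∀ x e, Cov ER x e →
      ∃ e', e' ∉ p x ∧ p (insert e x) = insert e' (p x) ∧ Cov ES' (p x) e')
    (hunion : ∀ x y, Config ER x → Config ER y → Config ER (x ∪ y) →
      p (x ∪ y) = p x ∪ p y) :
    ∃! f : R → S, IsMap ER ES' f ∧ ∀ x, Config ER x → f '' x = p x := by
  classical
  letI : PartialOrder R :=
    { le := ER.le, le_refl := ER.le_refl,
      le_trans := fun _ _ _ => ER.le_trans,
      le_antisymm := fun _ _ => ER.le_antisymm }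
  -- consistency extension lemma
  have con_ext : ∀ (Y : Set R), Y.Finite → ∀ (X : Set R), X ∈ ER.Con →
      (∀ y ∈ Y, ∃ x ∈ X, ER.le y x) → X ∪ Y ∈ ER.Con := by
    intro Y hY
    refine Set.Finite.induction_on _ hY (fun X hX _ => by simpa using hX) ?_
    intro a s ha hs ih X hX h
    have h1 : X ∪ s ∈ ER.Con := ih X hX (fun y hy => h y (Set.mem_insert_of_mem a hy))
    obtain ⟨x, hx, hle⟩ := h a (Set.mem_insert a s)
    have h2 := ER.con_extend h1 hle (Set.mem_union_left s hx)
    have heq : X ∪ insert a s = (X ∪ s) ∪ {a} := by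
      ext z; simp only [Set.mem_union, Set.mem_insert_iff, Set.mem_singleton_iff]; tauto
    rw [heq]; exact h2
  set causes : R → Set R := fun e => {e' | ER.le e' e} with hcauses
  set scauses : R → Set R := fun e => causes e \ {e} with hscauses
  have cfg_causes : ∀ e, Config ER (causes e) := by
    intro e
    constructor
    · have h := con_ext (causes e) (ER.causes_finite e) {e} (ER.con_singleton e)
        (fun y hy => ⟨e, rfl, hy⟩)
      have heq : ({e} : Set R) ∪ causes e = causes e := by
        apply Set.union_eq_self_of_subset_left
        intro z hz
        rw [Set.mem_singleton_iff] at hz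
        rw [hz]
        exact ER.le_refl e
      rwa [heq] at h
    · intro a ha b hb; exact ER.le_trans hb ha
  have cfg_scauses : ∀ e, Config ER (scauses e) := by
    intro e
    constructor
    · exact ER.con_mono Set.diff_subset (cfg_causes e).1
    · rintro a ⟨ha, hane⟩ b hb
      refine ⟨ER.le_trans hb ha, ?_⟩
      rw [Set.mem_singleton_iff]
      rintro rfl
      exact hane (Set.mem_singleton_iff.mpr (ER.le_antisymm ha hb))
  have hins : ∀ e, insert e (scauses e) = causes e := by
    intro e
    show insert e (causes e \ {e}) = causes e
    rw [Set.insert_diff_singleton]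
    exact Set.insert_eq_self.mpr (ER.le_refl e)
  have cov_causes : ∀ e, Cov ER (scauses e) e := by
    intro e
    refine ⟨cfg_scauses e, fun h => h.2 rfl, ?_⟩
    rw [hins e]; exact cfg_causes e
  -- define f
  set f : R → S := fun e => (hcov (scauses e) e (cov_causes e)).choose with hf
  have fspec : ∀ e, f e ∉ p (scauses e) ∧
      p (causes e) = insert (f e) (p (scauses e)) := by
    intro e
    obtain ⟨h1, h2, _⟩ := (hcov (scauses e) e (cov_causes e)).choose_spec
    exact ⟨h1, by rw [← hins e]; exact h2⟩
  -- monotonicity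
  have mono : ∀ x y, Config ER x → Config ER y → x ⊆ y → p x ⊆ p y := by
    intro x y hx hy hxy
    have heq : x ∪ y = y := Set.union_eq_self_of_subset_left hxy
    have h := hunion x y hx hy (by rw [heq]; exact hy)
    rw [heq] at h
    rw [h]; exact Set.subset_union_left
  -- main induction
  have main : ∀ n (x : Set R), x.ncard ≤ n → Config ER x →
      f '' x = p x ∧ ∀ e ∈ x, ∀ e' ∈ x, f e = f e' → e = e' := by
    intro n
    induction n with
    | zero =>
      intro x hcard hx
      have hfin := ER.con_finite x hx.1
      have hx0 : x = ∅ := by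
        rw [← Set.ncard_eq_zero hfin]; omega
      subst hx0
      refine ⟨?_, by simp⟩
      rw [Set.image_empty, hempty]
    | succ n ih =>
      intro x hcard hx
      have hfin := ER.con_finite x hx.1
      rcases Set.eq_empty_or_nonempty x with h0 | hne
      · subst h0
        refine ⟨?_, by simp⟩
        rw [Set.image_empty, hempty]
      obtain ⟨m, hm, hmax⟩ := Set.Finite.exists_maximalFor id x hfin hne
      set y : Set R := x \ {m} with hy
      have cfgy : Config ER y := by
        constructor
        · exact ER.con_mono Set.diff_subset hx.1
        · rintro a ⟨ha, hane⟩ b hb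
          refine ⟨hx.2 ha hb, ?_⟩
          rw [Set.mem_singleton_iff]
          rintro rfl
          exact hane (Set.mem_singleton_iff.mpr (ER.le_antisymm (hmax ha hb) hb))
      have hxins : insert m y = x := by
        rw [hy, Set.insert_diff_singleton]
        exact Set.insert_eq_self.mpr hm
      have covym : Cov ER y m := by
        refine ⟨cfgy, fun h => h.2 rfl, ?_⟩
        rw [hxins]; exact hx
      have hsub_sc : scauses m ⊆ y := by
        rintro a ⟨ha, hane⟩
        exact ⟨hx.2 hm ha, hane⟩
      have hxy_union : y ∪ causes m = x := by
        apply Set.Subset.antisymm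
        · intro z hz
          rcases hz with hz | hz
          · exact hz.1
          · exact hx.2 hm hz
        · intro z hz
          by_cases hzm : z = m
          · exact Or.inr (by rw [hzm]; exact ER.le_refl m)
          · exact Or.inl ⟨hz, hzm⟩
      have hupc := hunion y (causes m) cfgy (cfg_causes m) (by rw [hxy_union]; exact hx)
      rw [hxy_union] at hupc
      have hpscy : p (scauses m) ⊆ p y := mono _ _ (cfg_scauses m) cfgy hsub_sc
      have hpx : p x = insert (f m) (p y) := by
        rw [hupc, (fspec m).2]
        ext z
        simp only [Set.mem_union, Set.mem_insert_iff]
        constructor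
        · rintro (h | h | h)
          · exact Or.inr h
          · exact Or.inl h
          · exact Or.inr (hpscy h)
        · rintro (h | h)
          · exact Or.inr (Or.inl h)
          · exact Or.inl h
      -- f m ∉ p y
      obtain ⟨e'', he''ny, he''eq, _⟩ := hcov y m covym
      rw [hxins] at he''eq
      have hfm_notin : f m ∉ p y := by
        intro hmem
        have : p x = p y := by
          rw [hpx, Set.insert_eq_self.mpr hmem]
        have : e'' ∈ p y := by
          rw [← this, he''eq]; exact Set.mem_insert _ _
        exact he''ny this
      have hycard : y.ncard ≤ n := by
        have h' : y.ncard < x.ncard := by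
          rw [hy]; exact Set.ncard_diff_singleton_lt_of_mem hm hfin
        omega
      obtain ⟨hfy, injy⟩ := ih y hycard cfgy
      constructor
      · rw [hpx, ← hxins, Set.image_insert_eq, hfy]
      · intro e he e' he' hfe
        by_cases hem : e = m <;> by_cases he'm : e' = m
        · rw [hem, he'm]
        · exfalso
          have : e' ∈ y := ⟨he', he'm⟩
          have : f e' ∈ p y := by rw [← hfy]; exact ⟨e', this, rfl⟩
          rw [← hfe, hem] at this
          exact hfm_notin this
        · exfalso
          have : e ∈ y := ⟨he, hem⟩
          have : f e ∈ p y := by rw [← hfy]; exact ⟨e, this, rfl⟩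
          rw [hfe, he'm] at this
          exact hfm_notin this
        · exact injy e ⟨he, hem⟩ e' ⟨he', he'm⟩ hfe
  refine ⟨f, ⟨⟨?_, ?_⟩, ?_⟩, ?_⟩
  · intro x hx
    rw [(main x.ncard x le_rfl hx).1]
    exact hp x hx
  · intro x hx
    exact (main x.ncard x le_rfl hx).2
  · intro x hx
    exact (main x.ncard x le_rfl hx).1
  · rintro g ⟨⟨hgc, hginj⟩, hgp⟩
    funext e
    have h1 : g '' causes e = p (causes e) := hgp (causes e) (cfg_causes e)
    have h2 : g '' scauses e = p (scauses e) := hgp (scauses e) (cfg_scauses e)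
    have hge : g e ∈ p (causes e) := by
      rw [← h1]; exact ⟨e, ER.le_refl e, rfl⟩
    rw [(fspec e).2] at hge
    rcases hge with hge | hge
    · exact hge
    · exfalso
      rw [← h2] at hge
      obtain ⟨e₀, he₀, hge₀⟩ := hge
      have : e₀ = e := hginj (causes e) (cfg_causes e) e₀ he₀.1 e (ER.le_refl e) hge₀
      exact he₀.2 (Set.mem_singleton_iff.mpr this)
end

section
/- Let f : A → C and g : B → C be total maps of event structures and A ⊛ B their pullback. If [(a,b)]_x ⋖ [(a',b')]_x is an immediate causal dependency in A ⊛ B (both primes taken in the same member x of the restricted product family), then a ⋖ a' in A or b ⋖ b' in B. -/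
set_option autoImplicit false
set_option maxHeartbeats 1000000

universe u

variable {E F G H : Type u}

section Statement2Aux

variable {A B C : Type u} {EA : ES A} {EB : ES B} {EC : ES C} {f : A → C} {g : B → C}

lemma famLe_refl (Fam : Set (Set (A × B))) (x : Set (A × B)) (e : A × B) :
    FamLe Fam x e e := fun _ _ _ h => h

lemma pb_sub_mem {x y : Set (A × B)} (hx : x ∈ PbFam EA EB f g) (hyx : y ⊆ x)
    (h1 : Config EA (Prod.fst '' y)) (h2 : Config EB (Prod.snd '' y)) :
    y ∈ PbFam EA EB f g := by
  obtain ⟨⟨hfin, hA, hB, hi1, hi2, hcf⟩, hfg⟩ := hx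
  refine ⟨⟨hfin.subset hyx, h1, h2,
    fun p hp q hq h => hi1 p (hyx hp) q (hyx hq) h,
    fun p hp q hq h => hi2 p (hyx hp) q (hyx hq) h, ?_⟩,
    fun p hp => hfg p (hyx hp)⟩
  intro p hp q hq hne
  obtain ⟨y', hy'x, hy'A, hy'B, hpq⟩ := hcf p (hyx hp) q (hyx hq) hne
  refine ⟨y' ∩ y, Set.inter_subset_right, ⟨?_, ?_⟩, ⟨?_, ?_⟩, ?_⟩
  · exact EA.con_mono (Set.image_mono Set.inter_subset_right) h1.1
  · intro e he e' hle
    obtain ⟨p₀, hp₀, rfl⟩ := he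
    obtain ⟨p₁, hp₁, hp₁e⟩ := hy'A.2 ⟨p₀, hp₀.1, rfl⟩ hle
    obtain ⟨p₂, hp₂, hp₂e⟩ := h1.2 ⟨p₀, hp₀.2, rfl⟩ hle
    have hpp : p₁ = p₂ := hi1 p₁ (hy'x hp₁) p₂ (hyx hp₂) (hp₁e.trans hp₂e.symm)
    exact ⟨p₁, ⟨hp₁, hpp ▸ hp₂⟩, hp₁e⟩
  · exact EB.con_mono (Set.image_mono Set.inter_subset_right) h2.1
  · intro e he e' hle
    obtain ⟨p₀, hp₀, rfl⟩ := he
    obtain ⟨p₁, hp₁, hp₁e⟩ := hy'B.2 ⟨p₀, hp₀.1, rfl⟩ hle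
    obtain ⟨p₂, hp₂, hp₂e⟩ := h2.2 ⟨p₀, hp₀.2, rfl⟩ hle
    have hpp : p₁ = p₂ := hi2 p₁ (hy'x hp₁) p₂ (hyx hp₂) (hp₁e.trans hp₂e.symm)
    exact ⟨p₁, ⟨hp₁, hpp ▸ hp₂⟩, hp₁e⟩
  · constructor
    · rintro ⟨hpy', -⟩ ⟨hqy', -⟩
      exact (hpq.mp hpy') hqy'
    · intro hq'
      have hqy' : q ∉ y' := fun h => hq' ⟨h, hq⟩
      exact ⟨hpq.mpr hqy', hp⟩

lemma pb_famLe_fst {x : Set (A × B)} (hx : x ∈ PbFam EA EB f g)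
    {p q : A × B} (hp : p ∈ x) (h : EA.le p.1 q.1) :
    FamLe (PbFam EA EB f g) x p q := by
  intro y hy hyx hqy
  obtain ⟨p', hp', hp'e⟩ := hy.1.2.1.2 ⟨q, hqy, rfl⟩ h
  have : p' = p := hx.1.2.2.2.1 p' (hyx hp') p hp hp'e
  exact this ▸ hp'

lemma pb_famLe_snd {x : Set (A × B)} (hx : x ∈ PbFam EA EB f g)
    {p q : A × B} (hp : p ∈ x) (h : EB.le p.2 q.2) :
    FamLe (PbFam EA EB f g) x p q := by
  intro y hy hyx hqy
  obtain ⟨p', hp', hp'e⟩ := hy.1.2.2.1.2 ⟨q, hqy, rfl⟩ h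
  have : p' = p := hx.1.2.2.2.2.1 p' (hyx hp') p hp hp'e
  exact this ▸ hp'

lemma pb_famLe_antisymm {x : Set (A × B)} (hx : x ∈ PbFam EA EB f g)
    {p q : A × B} (hp : p ∈ x) (hq : q ∈ x)
    (h1 : FamLe (PbFam EA EB f g) x p q) (h2 : FamLe (PbFam EA EB f g) x q p) :
    p = q := by
  by_contra hne
  obtain ⟨y, hyx, hyA, hyB, hiff⟩ := hx.1.2.2.2.2.2 p hp q hq hne
  have hy := pb_sub_mem hx hyx hyA hyB
  by_cases hpy : p ∈ y
  · exact (hiff.mp hpy) (h2 y hy hyx hpy)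
  · have hqy : q ∈ y := by by_contra h; exact hpy (hiff.mpr h)
    exact hpy (h1 y hy hyx hqy)

/-- One "projection" step inside `x`. -/
def PbStep (EA : ES A) (EB : ES B) (x : Set (A × B)) (p q : A × B) : Prop :=
  p ∈ x ∧ q ∈ x ∧ (EA.le p.1 q.1 ∨ EB.le p.2 q.2)

lemma pb_chain_famLe {x : Set (A × B)} (hx : x ∈ PbFam EA EB f g)
    {p q : A × B} (h : Relation.ReflTransGen (PbStep EA EB x) p q) :
    FamLe (PbFam EA EB f g) x p q := by
  induction h with
  | refl => exact famLe_refl _ _ _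
  | tail hst hstep ih =>
    rename_i b c
    have hbc : FamLe (PbFam EA EB f g) x b c := by
      rcases hstep.2.2 with h | h
      · exact pb_famLe_fst hx hstep.1 h
      · exact pb_famLe_snd hx hstep.1 h
    exact fun y hy hyx hq => ih y hy hyx (hbc y hy hyx hq)

lemma pb_famLe_chain {x : Set (A × B)} (hx : x ∈ PbFam EA EB f g)
    {p q : A × B} (hp : p ∈ x) (hq : q ∈ x)
    (h : FamLe (PbFam EA EB f g) x p q) :
    Relation.ReflTransGen (PbStep EA EB x) p q := by
  set D := {r ∈ x | Relation.ReflTransGen (PbStep EA EB x) r q} with hD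
  have hDx : D ⊆ x := fun r hr => hr.1
  have hDA : Config EA (Prod.fst '' D) := by
    constructor
    · exact EA.con_mono (Set.image_mono hDx) hx.1.2.1.1
    · intro e he e' hle
      obtain ⟨r, ⟨hrx, hrc⟩, rfl⟩ := he
      obtain ⟨r', hr', hr'e⟩ := hx.1.2.1.2 ⟨r, hrx, rfl⟩ hle
      refine ⟨r', ⟨hr', Relation.ReflTransGen.head ⟨hr', hrx, Or.inl (hr'e ▸ hle)⟩ hrc⟩, hr'e⟩
  have hDB : Config EB (Prod.snd '' D) := by
    constructor
    · exact EB.con_mono (Set.image_mono hDx) hx.1.2.2.1.1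
    · intro e he e' hle
      obtain ⟨r, ⟨hrx, hrc⟩, rfl⟩ := he
      obtain ⟨r', hr', hr'e⟩ := hx.1.2.2.1.2 ⟨r, hrx, rfl⟩ hle
      refine ⟨r', ⟨hr', Relation.ReflTransGen.head ⟨hr', hrx, Or.inr (hr'e ▸ hle)⟩ hrc⟩, hr'e⟩
  have hDmem := pb_sub_mem hx hDx hDA hDB
  exact (h D hDmem hDx ⟨hq, Relation.ReflTransGen.refl⟩).2

end Statement2Aux

/-- characterization of immediate causality in the pullback. -/
theorem statement2 {A B C : Type u} (EA : ES A) (EB : ES B) (EC : ES C)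
    (f : A → C) (g : B → C) (hf : IsMap EA EC f) (hg : IsMap EB EC g)
    (x : Set (A × B)) (hx : x ∈ PbFam EA EB f g)
    (a a' : A) (b b' : B) (hab : (a, b) ∈ x) (hab' : (a', b') ∈ x)
    (himm : PrImm (PbFam EA EB f g) (FamPrime (PbFam EA EB f g) x (a, b))
      (FamPrime (PbFam EA EB f g) x (a', b'))) :
    Imm EA a a' ∨ Imm EB b b' := by
  set Fam := PbFam EA EB f g with hFam
  obtain ⟨hPp, hPq, ⟨hsub, hne⟩, hmax⟩ := himm
  have hab_ne : (a, b) ≠ (a', b') := fun h => hne (by rw [h])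
  have hle : FamLe Fam x (a, b) (a', b') :=
    (hsub ⟨hab, famLe_refl Fam x (a, b)⟩).2
  -- dichotomy: any event of x causally between (a,b) and (a',b') is one of them
  have dich : ∀ t, t ∈ x → FamLe Fam x (a, b) t → FamLe Fam x t (a', b') →
      t = (a, b) ∨ t = (a', b') := by
    intro t ht h1 h2
    by_contra hcon
    push_neg at hcon
    apply hmax (FamPrime Fam x t) ⟨x, hx, t, ht, rfl⟩
    · refine ⟨?_, ?_⟩
      · intro r hr
        exact ⟨hr.1, fun y hy hyx hty => hr.2 y hy hyx (h1 y hy hyx hty)⟩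
      · intro heq
        have htm : t ∈ FamPrime Fam x (a, b) := heq ▸ ⟨ht, famLe_refl Fam x t⟩
        exact hcon.1 (pb_famLe_antisymm hx ht hab htm.2 h1)
    · refine ⟨?_, ?_⟩
      · intro r hr
        exact ⟨hr.1, fun y hy hyx hty => hr.2 y hy hyx (h2 y hy hyx hty)⟩
      · intro heq
        have hqm : (a', b') ∈ FamPrime Fam x t := heq ▸ ⟨hab', famLe_refl Fam x _⟩
        exact hcon.2 (pb_famLe_antisymm hx ht hab' h2 hqm.2)
  have hch : Relation.ReflTransGen (PbStep EA EB x) (a, b) (a', b') :=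
    pb_famLe_chain hx hab hab' hle
  -- extract a single direct step from (a,b) to (a',b')
  have key : EA.le a a' ∨ EB.le b b' := by
    have H : ∀ s (_ : Relation.ReflTransGen (PbStep EA EB x) s (a', b')),
        s = (a, b) → EA.le a a' ∨ EB.le b b' := by
      intro s h
      induction h using Relation.ReflTransGen.head_induction_on with
      | refl => intro h0; exact absurd h0.symm hab_ne
      | head hst hrest ih =>
        rename_i s t
        rintro rfl
        have h1 : FamLe Fam x (a, b) t := by
          rcases hst.2.2 with h | h
          · exact pb_famLe_fst hx hst.1 h
          · exact pb_famLe_snd hx hst.1 h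
        have h2 : FamLe Fam x t (a', b') := pb_chain_famLe hx hrest
        rcases dich t hst.2.1 h1 h2 with rfl | rfl
        · exact ih rfl
        · exact hst.2.2
    exact H (a, b) hch rfl
  rcases key with hA | hB
  · left
    have hne' : a ≠ a' := by
      intro h
      exact hab_ne (hx.1.2.2.2.1 (a, b) hab (a', b') hab' h)
    refine ⟨⟨hA, hne'⟩, ?_⟩
    rintro a'' ⟨h1, h1ne⟩ ⟨h2, h2ne⟩
    obtain ⟨p'', hp'', hp''e⟩ := hx.1.2.1.2 ⟨(a', b'), hab', rfl⟩ h2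
    have l1 : FamLe Fam x (a, b) p'' :=
      pb_famLe_fst hx hab (show EA.le (a, b).1 p''.1 by rw [hp''e]; exact h1)
    have l2 : FamLe Fam x p'' (a', b') :=
      pb_famLe_fst hx hp'' (show EA.le p''.1 (a', b').1 by rw [hp''e]; exact h2)
    rcases dich p'' hp'' l1 l2 with h | h
    · exact h1ne (by rw [← hp''e, h])
    · exact h2ne (by rw [← hp''e, h])
  · right
    have hne' : b ≠ b' := by
      intro h
      exact hab_ne (hx.1.2.2.2.2.1 (a, b) hab (a', b') hab' h)
    refine ⟨⟨hB, hne'⟩, ?_⟩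
    rintro b'' ⟨h1, h1ne⟩ ⟨h2, h2ne⟩
    obtain ⟨p'', hp'', hp''e⟩ := hx.1.2.2.1.2 ⟨(a', b'), hab', rfl⟩ h2
    have l1 : FamLe Fam x (a, b) p'' :=
      pb_famLe_snd hx hab (show EB.le (a, b).2 p''.2 by rw [hp''e]; exact h1)
    have l2 : FamLe Fam x p'' (a', b') :=
      pb_famLe_snd hx hp'' (show EB.le p''.2 (a', b').2 by rw [hp''e]; exact h2)
    rcases dich p'' hp'' l1 l2 with h | h
    · exact h1ne (by rw [← hp''e, h])
    · exact h2ne (by rw [← hp''e, h])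
end

section
/- Let f : A → C and g : B → C be total maps of event structures and A ⊛ B their pullback. Suppose x ∈ C(A ⊛ B) with x —⊂ [(a,b)]_y and x —⊂ [(a',b')]_{y'} but x ∪ {[(a,b)]_y, [(a',b')]_{y'}} ∉ C(A ⊛ B). Then Π₁(x) ∪ {a, a'} ∉ C(A) or Π₂(x) ∪ {b, b'} ∉ C(B). -/
set_option autoImplicit false
set_option maxHeartbeats 1000000

universe u

variable {E F G H : Type u}

section Statement3Aux

variable {A B C : Type u} {EA : ES A} {EB : ES B} {EC : ES C} {f : A → C} {g : B → C}

lemma config_inter {E : Type u} {S : ES E} {x y : Set E} (hx : Config S x) (hy : Config S y) :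
    Config S (x ∩ y) :=
  ⟨S.con_mono Set.inter_subset_left hx.1,
   fun _ he _ hle => ⟨hx.2 he.1 hle, hy.2 he.2 hle⟩⟩

lemma pb_restrict {x y₀ : Set (A × B)} (hx : x ∈ PbFam EA EB f g) (hsub : y₀ ⊆ x)
    (h1 : Config EA (Prod.fst '' y₀)) (h2 : Config EB (Prod.snd '' y₀)) :
    y₀ ∈ PbFam EA EB f g := by
  obtain ⟨⟨hfin, hcA, hcB, hinj1, hinj2, hcf⟩, hfg⟩ := hx
  have hinj1' : Set.InjOn Prod.fst x := fun p hp q hq h => hinj1 p hp q hq h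
  have hinj2' : Set.InjOn Prod.snd x := fun p hp q hq h => hinj2 p hp q hq h
  refine ⟨⟨hfin.subset hsub, h1, h2,
    fun p hp q hq h => hinj1 p (hsub hp) q (hsub hq) h,
    fun p hp q hq h => hinj2 p (hsub hp) q (hsub hq) h, ?_⟩,
    fun p hp => hfg p (hsub hp)⟩
  intro s hs t ht hne
  obtain ⟨y₁, hy₁x, hy₁A, hy₁B, hiff⟩ := hcf s (hsub hs) t (hsub ht) hne
  refine ⟨y₀ ∩ y₁, Set.inter_subset_left, ?_, ?_, ?_⟩
  · rw [hinj1'.image_inter hsub hy₁x]; exact config_inter h1 hy₁A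
  · rw [hinj2'.image_inter hsub hy₁x]; exact config_inter h2 hy₁B
  · constructor
    · rintro ⟨-, hs1⟩ ⟨-, ht1⟩; exact (hiff.mp hs1) ht1
    · intro ht1; exact ⟨hs, hiff.mpr fun h => ht1 ⟨ht, h⟩⟩

lemma pb_antisym {y : Set (A × B)} (hy : y ∈ PbFam EA EB f g) {e e' : A × B}
    (he : e ∈ y) (he' : e' ∈ y) (h1 : FamLe (PbFam EA EB f g) y e e')
    (h2 : FamLe (PbFam EA EB f g) y e' e) : e = e' := by
  by_contra hne
  obtain ⟨y₁, hy₁y, hy₁A, hy₁B, hiff⟩ := hy.1.2.2.2.2.2 e he e' he' hne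
  have hy₁ : y₁ ∈ PbFam EA EB f g := pb_restrict hy hy₁y hy₁A hy₁B
  by_cases h : e' ∈ y₁
  · exact hiff.mp (h1 y₁ hy₁ hy₁y h) h
  · exact h (h2 y₁ hy₁ hy₁y (hiff.mpr h))

lemma prime_top_mem {y : Set (A × B)} {ab : A × B} (hab : ab ∈ y) :
    ab ∈ FamPrime (PbFam EA EB f g) y ab :=
  ⟨hab, fun _ _ _ h => h⟩

lemma prime_sub {z : Set (Set (A × B))} {y : Set (A × B)} {ab : A × B}
    (hy : y ∈ PbFam EA EB f g) (hab : ab ∈ y)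
    (hp2 : PrConfig (PbFam EA EB f g) (insert (FamPrime (PbFam EA EB f g) y ab) z)) :
    FamPrime (PbFam EA EB f g) y ab ⊆ ⋃₀ z ∪ {ab} := by
  intro e he
  by_cases heq : e = ab
  · exact Or.inr heq
  refine Or.inl ?_
  have hey : e ∈ y := he.1
  have hrsub : FamPrime (PbFam EA EB f g) y e ⊆ FamPrime (PbFam EA EB f g) y ab :=
    fun e' he' => ⟨he'.1, fun y₀ h₀ hs hm => he'.2 y₀ h₀ hs (he.2 y₀ h₀ hs hm)⟩
  have hr := hp2.2.2.1 _ (Set.mem_insert _ _) _ ⟨y, hy, e, hey, rfl⟩ hrsub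
  rcases hr with hr | hr
  · exfalso
    apply heq
    have habr : ab ∈ FamPrime (PbFam EA EB f g) y e := by
      rw [hr]; exact prime_top_mem hab
    exact pb_antisym hy hey hab he.2 habr.2
  · exact ⟨_, hr, hey, fun _ _ _ h => h⟩

end Statement3Aux

/-- characterization of immediate conflict in the pullback. -/
theorem statement3 {A B C : Type u} (EA : ES A) (EB : ES B) (EC : ES C)
    (f : A → C) (g : B → C) (hf : IsMap EA EC f) (hg : IsMap EB EC g)
    (z : Set (Set (A × B))) (hz : PrConfig (PbFam EA EB f g) z)
    (y y' : Set (A × B)) (hy : y ∈ PbFam EA EB f g) (hy' : y' ∈ PbFam EA EB f g)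
    (a a' : A) (b b' : B) (hab : (a, b) ∈ y) (hab' : (a', b') ∈ y')
    (hp1 : FamPrime (PbFam EA EB f g) y (a, b) ∉ z)
    (hp2 : PrConfig (PbFam EA EB f g) (insert (FamPrime (PbFam EA EB f g) y (a, b)) z))
    (hq1 : FamPrime (PbFam EA EB f g) y' (a', b') ∉ z)
    (hq2 : PrConfig (PbFam EA EB f g) (insert (FamPrime (PbFam EA EB f g) y' (a', b')) z))
    (hcon : ¬ PrConfig (PbFam EA EB f g)
      (z ∪ {FamPrime (PbFam EA EB f g) y (a, b), FamPrime (PbFam EA EB f g) y' (a', b')})) :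
    ¬ Config EA (Prod.fst '' ⋃₀ z ∪ {a, a'}) ∨
    ¬ Config EB (Prod.snd '' ⋃₀ z ∪ {b, b'}) := by
  by_contra hcontra
  push_neg at hcontra
  obtain ⟨hA, hB⟩ := hcontra
  set Fam := PbFam EA EB f g with hFam
  set p := FamPrime Fam y (a, b) with hp
  set q := FamPrime Fam y' (a', b') with hq
  have habp : (a, b) ∈ p := prime_top_mem hab
  have hab'q : (a', b') ∈ q := prime_top_mem hab'
  have hpsub : p ⊆ ⋃₀ z ∪ {(a, b)} := prime_sub hy hab hp2
  have hqsub : q ⊆ ⋃₀ z ∪ {(a', b')} := prime_sub hy' hab' hq2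
  set u : Set (A × B) := ⋃₀ z ∪ {(a, b)} with hu
  set v : Set (A × B) := ⋃₀ z ∪ {(a', b')} with hv
  have huEq : ⋃₀ (insert p z) = u := by
    rw [Set.sUnion_insert]
    apply Set.Subset.antisymm
    · exact Set.union_subset hpsub Set.subset_union_left
    · rintro e (he | he)
      · exact Or.inr he
      · rw [Set.mem_singleton_iff] at he
        exact Or.inl (he ▸ habp)
  have hvEq : ⋃₀ (insert q z) = v := by
    rw [Set.sUnion_insert]
    apply Set.Subset.antisymm
    · exact Set.union_subset hqsub Set.subset_union_left
    · rintro e (he | he)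
      · exact Or.inr he
      · rw [Set.mem_singleton_iff] at he
        exact Or.inl (he ▸ hab'q)
  have huF : u ∈ Fam := huEq ▸ hp2.2.2.2
  have hvF : v ∈ Fam := hvEq ▸ hq2.2.2.2
  set w : Set (A × B) := ⋃₀ z ∪ {(a, b), (a', b')} with hw
  have hwu : u ⊆ w := by
    apply Set.union_subset Set.subset_union_left
    intro e he; rw [Set.mem_singleton_iff] at he
    exact Or.inr (he ▸ Set.mem_insert _ _)
  have hwv : v ⊆ w := by
    apply Set.union_subset Set.subset_union_left
    intro e he; rw [Set.mem_singleton_iff] at he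
    exact Or.inr (he ▸ Set.mem_insert_of_mem _ rfl)
  have hmemu : ∀ s ∈ w, s ∈ u ∨ s = (a', b') := by
    rintro s (hs | hs | hs)
    · exact Or.inl (Or.inl hs)
    · exact Or.inl (Or.inr hs)
    · exact Or.inr hs
  have hmemv : ∀ s ∈ w, s ∈ v ∨ s = (a, b) := by
    rintro s (hs | hs | hs)
    · exact Or.inl (Or.inl hs)
    · exact Or.inr hs
    · exact Or.inl (Or.inr hs)
  have hw1 : Prod.fst '' w = Prod.fst '' ⋃₀ z ∪ {a, a'} := by
    rw [hw, Set.image_union, Set.image_pair]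
  have hw2 : Prod.snd '' w = Prod.snd '' ⋃₀ z ∪ {b, b'} := by
    rw [hw, Set.image_union, Set.image_pair]
  have hAw : Config EA (Prod.fst '' w) := hw1 ▸ hA
  have hBw : Config EB (Prod.snd '' w) := hw2 ▸ hB
  -- the cross case of injectivity
  have hfa : f a = g b := hy.2 (a, b) hab
  have hfa' : f a' = g b' := hy'.2 (a', b') hab'
  have cross : ∀ s t : A × B, s = (a, b) → t = (a', b') →
      (s.1 = t.1 ∨ s.2 = t.2) → s = t := by
    rintro s t rfl rfl h
    rcases h with h | h
    · simp only at h
      have hb : b = b' := by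
        apply hg.2 _ hBw b ⟨(a, b), hwu (Or.inr rfl), rfl⟩ b'
          ⟨(a', b'), hwv (Or.inr rfl), rfl⟩
        rw [← hfa, ← hfa', h]
      rw [h, hb]
    · simp only at h
      have ha : a = a' := by
        apply hf.2 _ hAw a ⟨(a, b), hwu (Or.inr rfl), rfl⟩ a'
          ⟨(a', b'), hwv (Or.inr rfl), rfl⟩
        rw [hfa, hfa', h]
      rw [h, ha]
  have hwF : w ∈ Fam := by
    refine ⟨⟨?_, hAw, hBw, ?_, ?_, ?_⟩, ?_⟩
    · exact (huF.1.1.subset Set.subset_union_left).union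
        ((Set.finite_singleton _).insert _)
    · -- fst injective
      intro s hs t ht h
      rcases hmemu s hs with hsu | hsu <;> rcases hmemu t ht with htu | htu
      · exact huF.1.2.2.2.1 s hsu t htu h
      · rcases hmemv s hs with hsv | hsv
        · exact hvF.1.2.2.2.1 s hsv t (by rw [htu]; exact Or.inr rfl) h
        · exact cross s t hsv htu (Or.inl h)
      · rcases hmemv t ht with htv | htv
        · exact hvF.1.2.2.2.1 s (by rw [hsu]; exact Or.inr rfl) t htv h
        · exact (cross t s htv hsu (Or.inl h.symm)).symm
      · rw [hsu, htu]
    · -- snd injective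
      intro s hs t ht h
      rcases hmemu s hs with hsu | hsu <;> rcases hmemu t ht with htu | htu
      · exact huF.1.2.2.2.2.1 s hsu t htu h
      · rcases hmemv s hs with hsv | hsv
        · exact hvF.1.2.2.2.2.1 s hsv t (by rw [htu]; exact Or.inr rfl) h
        · exact cross s t hsv htu (Or.inr h)
      · rcases hmemv t ht with htv | htv
        · exact hvF.1.2.2.2.2.1 s (by rw [hsu]; exact Or.inr rfl) t htv h
        · exact (cross t s htv hsu (Or.inr h.symm)).symm
      · rw [hsu, htu]
    · -- coincidence-freeness
      intro s hs t ht hne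
      by_cases hsu : s ∈ u <;> by_cases htu : t ∈ u
      · obtain ⟨y₁, h₁, h₂, h₃, h₄⟩ := huF.1.2.2.2.2.2 s hsu t htu hne
        exact ⟨y₁, h₁.trans hwu, h₂, h₃, h₄⟩
      · refine ⟨u, hwu, huF.1.2.1, huF.1.2.2.1, ?_⟩
        simp [hsu, htu]
      · refine ⟨u, hwu, huF.1.2.1, huF.1.2.2.1, ?_⟩
        simp [hsu, htu]
      · exfalso
        rcases hmemu s hs with h | h; · exact hsu h
        rcases hmemu t ht with h' | h'; · exact htu h'
        exact hne (h.trans h'.symm)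
    · -- f = g
      intro s hs
      rcases hmemu s hs with h | h
      · exact huF.2 s h
      · rw [h]; exact hfa'
  -- assemble the configuration z ∪ {p, q}
  apply hcon
  have hfinz : z.Finite := hz.1
  refine ⟨hfinz.union ((Set.finite_singleton _).insert _), ?_, ?_, ?_⟩
  · rintro r (hr | hr | hr)
    · exact hz.2.1 r hr
    · exact hr ▸ hp2.2.1 p (Set.mem_insert _ _)
    · exact hr ▸ hq2.2.1 q (Set.mem_insert _ _)
  · rintro r (hr | hr | hr) s hsp hsub
    · exact Or.inl (hz.2.2.1 r hr s hsp hsub)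
    · rcases hp2.2.2.1 r (hr ▸ Set.mem_insert _ _) s hsp hsub with h | h
      · exact Or.inr (Or.inl h)
      · exact Or.inl h
    · rcases hq2.2.2.1 r (hr ▸ Set.mem_insert _ _) s hsp hsub with h | h
      · exact Or.inr (Or.inr h)
      · exact Or.inl h
  · have : ⋃₀ (z ∪ {p, q}) = w := by
      rw [Set.sUnion_union, Set.sUnion_pair]
      apply Set.Subset.antisymm
      · apply Set.union_subset Set.subset_union_left
        exact Set.union_subset (hpsub.trans hwu) (hqsub.trans hwv)
      · rintro e (he | he | he)
        · exact Or.inl he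
        · exact Or.inr (Or.inl (he ▸ habp))
        · exact Or.inr (Or.inr (he ▸ hab'q))
    rw [this]
    exact hwF
end

section
/- Let f : A → C and g : B → C be total maps of event structures and A ⊛ B their pullback. The map sending a configuration z ∈ C(A ⊛ B) to the union ∪z of its primes (a set of pairs) is a bijection between configurations of A ⊛ B and secured bijections between configurations of A and B: sets θ ⊆ A × B that are the graph of a bijection θ : x ≅ y with x ∈ C(A), y ∈ C(B), f(a) = g(b) for all (a,b) ∈ θ, and such that the transitive closure of the relation (a,b) ≼ (a',b') iff a ≤_A a' or b ≤_B b', restricted to θ, is a partial order. -/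
set_option autoImplicit false
set_option maxHeartbeats 1000000

universe u

variable {E F G H : Type u}

section Statement4Aux

variable {A B C : Type u} {EA : ES A} {EB : ES B} {EC : ES C} {f : A → C} {g : B → C}

lemma s4_config_inter {α : Type u} {E1 : ES α} {x y : Set α}
    (hx : Config E1 x) (hy : Config E1 y) : Config E1 (x ∩ y) :=
  ⟨E1.con_mono Set.inter_subset_left hx.1,
   fun _ he _ hle => ⟨hx.2 he.1 hle, hy.2 he.2 hle⟩⟩

lemma s4_inter_mem {x y y' : Set (A × B)} (hx : x ∈ PbFam EA EB f g)
    (hy : y ∈ PbFam EA EB f g) (hy' : y' ∈ PbFam EA EB f g)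
    (hyx : y ⊆ x) (hy'x : y' ⊆ x) : y ∩ y' ∈ PbFam EA EB f g := by
  obtain ⟨⟨hxf, hxA, hxB, hx1, hx2, hxc⟩, hxfg⟩ := hx
  obtain ⟨⟨hyf, hyA, hyB, _, _, hyc⟩, hyfg⟩ := hy
  obtain ⟨⟨_, hy'A, hy'B, _, _, _⟩, _⟩ := hy'
  have hinj1 : Set.InjOn Prod.fst x := fun p hp q hq h => hx1 p hp q hq h
  have hinj2 : Set.InjOn Prod.snd x := fun p hp q hq h => hx2 p hp q hq h
  refine ⟨⟨hyf.subset Set.inter_subset_left, ?_, ?_, ?_, ?_, ?_⟩, fun p hp => hyfg p hp.1⟩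
  · rw [hinj1.image_inter hyx hy'x]; exact s4_config_inter hyA hy'A
  · rw [hinj2.image_inter hyx hy'x]; exact s4_config_inter hyB hy'B
  · exact fun p hp q hq h => hx1 p (hyx hp.1) q (hyx hq.1) h
  · exact fun p hp q hq h => hx2 p (hyx hp.1) q (hyx hq.1) h
  · intro p hp q hq hne
    obtain ⟨w, hw, hwA, hwB, hiff⟩ := hyc p hp.1 q hq.1 hne
    refine ⟨w ∩ y', fun e he => ⟨hw he.1, he.2⟩, ?_, ?_, ?_⟩
    · rw [hinj1.image_inter (hw.trans hyx) hy'x]; exact s4_config_inter hwA hy'A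
    · rw [hinj2.image_inter (hw.trans hyx) hy'x]; exact s4_config_inter hwB hy'B
    · simpa [Set.mem_inter_iff, hp.2, hq.2] using hiff

lemma s4_sInter_mem {x : Set (A × B)} (hx : x ∈ PbFam EA EB f g)
    {S : Set (Set (A × B))} (hS : S.Finite) (hne : S.Nonempty)
    (hsub : ∀ y ∈ S, y ∈ PbFam EA EB f g ∧ y ⊆ x) :
    ⋂₀ S ∈ PbFam EA EB f g ∧ ⋂₀ S ⊆ x := by
  revert hne hsub
  refine Set.Finite.induction_on S hS (fun h _ => absurd h (by simp)) ?_
  intro a s ha hs ih hne hsub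
  rcases s.eq_empty_or_nonempty with rfl | hne'
  · simp only [Set.sInter_insert, Set.sInter_empty, Set.inter_univ]
    exact hsub a (Set.mem_insert _ _)
  · have ih' := ih hne' (fun y hy => hsub y (Set.mem_insert_of_mem _ hy))
    have ha' := hsub a (Set.mem_insert _ _)
    rw [Set.sInter_insert]
    exact ⟨s4_inter_mem hx ha'.1 ih'.1 ha'.2 ih'.2, fun e he => ha'.2 he.1⟩

lemma s4_famPrime_mem {x : Set (A × B)} (hx : x ∈ PbFam EA EB f g) {e : A × B}
    (he : e ∈ x) : FamPrime (PbFam EA EB f g) x e ∈ PbFam EA EB f g := by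
  set S : Set (Set (A × B)) := {y | y ∈ PbFam EA EB f g ∧ y ⊆ x ∧ e ∈ y} with hSdef
  have hfin : S.Finite := hx.1.1.finite_subsets.subset (fun y hy => hy.2.1)
  have hne : S.Nonempty := ⟨x, hx, subset_rfl, he⟩
  have heq : FamPrime (PbFam EA EB f g) x e = ⋂₀ S := by
    ext e'
    constructor
    · rintro ⟨h1, h2⟩ y ⟨hy1, hy2, hy3⟩
      exact h2 y hy1 hy2 hy3
    · intro h
      exact ⟨h x ⟨hx, subset_rfl, he⟩, fun y hy1 hy2 hy3 => h y ⟨hy1, hy2, hy3⟩⟩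
  rw [heq]
  exact (s4_sInter_mem hx hfin hne (fun y hy => ⟨hy.1, hy.2.1⟩)).1

lemma s4_prConfig_eq {z : Set (Set (A × B))} (hz : PrConfig (PbFam EA EB f g) z) :
    z = {q | ∃ e ∈ ⋃₀ z, q = FamPrime (PbFam EA EB f g) (⋃₀ z) e} := by
  have hx : ⋃₀ z ∈ PbFam EA EB f g := hz.2.2.2
  ext p
  constructor
  · intro hp
    obtain ⟨w, hw, e, hew, rfl⟩ := hz.2.1 p hp
    have hPx : FamPrime (PbFam EA EB f g) w e ⊆ ⋃₀ z := Set.subset_sUnion_of_mem hp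
    have heP : e ∈ FamPrime (PbFam EA EB f g) w e := ⟨hew, fun y _ _ h => h⟩
    have hPF : FamPrime (PbFam EA EB f g) w e ∈ PbFam EA EB f g := s4_famPrime_mem hw hew
    refine ⟨e, hPx heP, ?_⟩
    apply Set.Subset.antisymm
    · intro e' he'
      refine ⟨hPx he', fun y hyF hyx hey => ?_⟩
      have hu : y ∩ FamPrime (PbFam EA EB f g) w e ∈ PbFam EA EB f g :=
        s4_inter_mem hx hyF hPF hyx hPx
      have he'u : e' ∈ y ∩ FamPrime (PbFam EA EB f g) w e :=
        he'.2 _ hu (fun a ha => ha.2.1) ⟨hey, heP⟩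
      exact he'u.1
    · intro e' he'
      exact he'.2 _ hPF hPx heP
  · rintro ⟨e, he, rfl⟩
    obtain ⟨p', hp', hep'⟩ := he
    have hp'F : p' ∈ PbFam EA EB f g := by
      obtain ⟨w', hw', e'', he'', heq⟩ := hz.2.1 p' hp'
      rw [heq]; exact s4_famPrime_mem hw' he''
    have hp'x : p' ⊆ ⋃₀ z := Set.subset_sUnion_of_mem hp'
    have hsub : FamPrime (PbFam EA EB f g) (⋃₀ z) e ⊆ p' :=
      fun e' h => h.2 p' hp'F hp'x hep'
    exact hz.2.2.1 p' hp' _ ⟨⋃₀ z, hx, e, ⟨p', hp', hep'⟩, rfl⟩ hsub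

lemma s4_secured_of_mem {x : Set (A × B)} (hx : x ∈ PbFam EA EB f g) :
    SecuredBij EA EB f g x := by
  obtain ⟨⟨hxf, hxA, hxB, hx1, hx2, hxc⟩, hxfg⟩ := hx
  refine ⟨hxA, hxB, ?_, hxfg, ?_⟩
  · intro p hp q hq
    exact ⟨fun h => by rw [hx1 p hp q hq h], fun h => by rw [hx2 p hp q hq h]⟩
  · have hstep : ∀ p q, SecStep EA EB x p q → ∀ y, y ⊆ x →
        Config EA (Prod.fst '' y) → Config EB (Prod.snd '' y) → q ∈ y → p ∈ y := by
      rintro p q ⟨hp, hq, h | h⟩ y hyx hyA hyB hqy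
      · obtain ⟨p', hp', he⟩ := hyA.2 (Set.mem_image_of_mem _ hqy) h
        rwa [hx1 p' (hyx hp') p hp he] at hp'
      · obtain ⟨p', hp', he⟩ := hyB.2 (Set.mem_image_of_mem _ hqy) h
        rwa [hx2 p' (hyx hp') p hp he] at hp'
    have htrans : ∀ p q, Relation.TransGen (SecStep EA EB x) p q → ∀ y, y ⊆ x →
        Config EA (Prod.fst '' y) → Config EB (Prod.snd '' y) → q ∈ y → p ∈ y := by
      intro p q h
      induction h with
      | single h => exact hstep _ _ h
      | tail h1 h2 ih =>
        intro y hyx hyA hyB hqy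
        exact ih y hyx hyA hyB (hstep _ _ h2 y hyx hyA hyB hqy)
    have hmem : ∀ p q, Relation.TransGen (SecStep EA EB x) p q → p ∈ x ∧ q ∈ x := by
      intro p q h
      induction h with
      | single h => exact ⟨h.1, h.2.1⟩
      | tail h1 h2 ih => exact ⟨ih.1, h2.2.1⟩
    intro p q hpq hqp
    by_contra hne
    obtain ⟨w, hwx, hwA, hwB, hiff⟩ := hxc p (hmem p q hpq).1 q (hmem p q hpq).2 hne
    have h1 := htrans p q hpq w hwx hwA hwB
    have h2 := htrans q p hqp w hwx hwA hwB
    tauto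

lemma s4_mem_of_secured {θ : Set (A × B)} (hθ : SecuredBij EA EB f g θ) :
    θ ∈ PbFam EA EB f g := by
  obtain ⟨hA, hB, hbij, hfg, hsec⟩ := hθ
  have hinj1 : ∀ p ∈ θ, ∀ q ∈ θ, p.1 = q.1 → p = q := fun p hp q hq h =>
    Prod.ext h ((hbij p hp q hq).1 h)
  have hinj2 : ∀ p ∈ θ, ∀ q ∈ θ, p.2 = q.2 → p = q := fun p hp q hq h =>
    Prod.ext ((hbij p hp q hq).2 h) h
  have hfin : θ.Finite :=
    Set.Finite.of_finite_image (EA.con_finite _ hA.1)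
      (fun p hp q hq h => hinj1 p hp q hq h)
  have hgoodA : ∀ r0 : A × B,
      Config EA (Prod.fst '' {r | r ∈ θ ∧ Relation.ReflTransGen (SecStep EA EB θ) r r0}) := by
    intro r0
    refine ⟨EA.con_mono (Set.image_mono (fun r hr => hr.1)) hA.1, ?_⟩
    rintro a ⟨r, hr, rfl⟩ a' hle
    obtain ⟨p', hp', rfl⟩ := hA.2 (Set.mem_image_of_mem _ hr.1) hle
    exact ⟨p', ⟨hp', Relation.ReflTransGen.head ⟨hp', hr.1, Or.inl hle⟩ hr.2⟩, rfl⟩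
  have hgoodB : ∀ r0 : A × B,
      Config EB (Prod.snd '' {r | r ∈ θ ∧ Relation.ReflTransGen (SecStep EA EB θ) r r0}) := by
    intro r0
    refine ⟨EB.con_mono (Set.image_mono (fun r hr => hr.1)) hB.1, ?_⟩
    rintro b ⟨r, hr, rfl⟩ b' hle
    obtain ⟨p', hp', rfl⟩ := hB.2 (Set.mem_image_of_mem _ hr.1) hle
    exact ⟨p', ⟨hp', Relation.ReflTransGen.head ⟨hp', hr.1, Or.inr hle⟩ hr.2⟩, rfl⟩
  refine ⟨⟨hfin, hA, hB, hinj1, hinj2, ?_⟩, hfg⟩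
  intro p hp q hq hne
  by_cases hqp : Relation.TransGen (SecStep EA EB θ) q p
  · refine ⟨{r | r ∈ θ ∧ Relation.ReflTransGen (SecStep EA EB θ) r q},
      fun r hr => hr.1, hgoodA q, hgoodB q, ?_⟩
    have hqD : q ∈ {r | r ∈ θ ∧ Relation.ReflTransGen (SecStep EA EB θ) r q} :=
      ⟨hq, Relation.ReflTransGen.refl⟩
    have hpD : p ∉ {r | r ∈ θ ∧ Relation.ReflTransGen (SecStep EA EB θ) r q} := by
      rintro ⟨-, h⟩
      rcases (Relation.reflTransGen_iff_eq_or_transGen.mp h) with h' | h'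
      · exact hne h'.symm
      · exact hne (hsec p q h' hqp)
    exact iff_of_false hpD (not_not_intro hqD)
  · refine ⟨{r | r ∈ θ ∧ Relation.ReflTransGen (SecStep EA EB θ) r p},
      fun r hr => hr.1, hgoodA p, hgoodB p, ?_⟩
    have hpD : p ∈ {r | r ∈ θ ∧ Relation.ReflTransGen (SecStep EA EB θ) r p} :=
      ⟨hp, Relation.ReflTransGen.refl⟩
    have hqD : q ∉ {r | r ∈ θ ∧ Relation.ReflTransGen (SecStep EA EB θ) r p} := by
      rintro ⟨-, h⟩
      rcases (Relation.reflTransGen_iff_eq_or_transGen.mp h) with h' | h'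
      · exact hne h'
      · exact hqp h'
    exact iff_of_true hpD hqD

end Statement4Aux

/-- configurations of the pullback correspond to secured bijections. -/
theorem statement4 {A B C : Type u} (EA : ES A) (EB : ES B) (EC : ES C)
    (f : A → C) (g : B → C) (hf : IsMap EA EC f) (hg : IsMap EB EC g) :
    Set.BijOn (Set.sUnion : Set (Set (A × B)) → Set (A × B)) {z | PrConfig (PbFam EA EB f g) z}
      {θ | SecuredBij EA EB f g θ} := by
  refine ⟨fun z hz => s4_secured_of_mem hz.2.2.2, fun z1 h1 z2 h2 heq => ?_, fun θ hθ => ?_⟩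
  · rw [s4_prConfig_eq h1, s4_prConfig_eq h2, heq]
  · have hθF : θ ∈ PbFam EA EB f g := s4_mem_of_secured hθ
    have hfin : θ.Finite := hθF.1.1
    have hun : ⋃₀ {q | IsPrime (PbFam EA EB f g) q ∧ q ⊆ θ} = θ := by
      apply Set.Subset.antisymm
      · exact Set.sUnion_subset (fun q hq => hq.2)
      · intro e he
        exact Set.mem_sUnion.2 ⟨FamPrime (PbFam EA EB f g) θ e,
          ⟨⟨θ, hθF, e, he, rfl⟩, fun e' h => h.1⟩, he, fun y _ _ h => h⟩
    refine ⟨{q | IsPrime (PbFam EA EB f g) q ∧ q ⊆ θ}, ?_, hun⟩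
    refine ⟨hfin.finite_subsets.subset (fun q hq => hq.2), fun p hp => hp.1,
      fun p hp q hqpr hsub => ⟨hqpr, hsub.trans hp.2⟩, ?_⟩
    rw [hun]; exact hθF
end

section
/- Let A and B be event structures with symmetry, with symmetry event structures Ã, B̃ carrying their higher isomorphism families. (1) If f : A → B is a map of ess, then the induced map f̃ : Ã → B̃ (sending θ to f(θ)) is a map of ess, i.e. preserves the higher symmetries. (2) If f, g : A → B are maps of ess with f ∼ g, then f̃ ∼ g̃. -/
set_option autoImplicit false
set_option maxHeartbeats 1000000

universe u

variable {E F G H : Type u}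

lemma mem_rdom' {E : Type u} {θ : Rel2 E} {a : E} : a ∈ rdom θ ↔ ∃ b, (a, b) ∈ θ := by
  constructor
  · rintro ⟨⟨u, v⟩, h, rfl⟩; exact ⟨v, h⟩
  · rintro ⟨b, h⟩; exact ⟨(a, b), h, rfl⟩

lemma mem_rran' {E : Type u} {θ : Rel2 E} {b : E} : b ∈ rran θ ↔ ∃ a, (a, b) ∈ θ := by
  constructor
  · rintro ⟨⟨u, v⟩, h, rfl⟩; exact ⟨u, h⟩
  · rintro ⟨a, h⟩; exact ⟨(a, b), h, rfl⟩

lemma relMap_mem' {E F : Type u} {f : E → F} {θ : Rel2 E} {a b : E} (h : (a, b) ∈ θ) :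
    (f a, f b) ∈ relMap f θ := ⟨(a, b), h, rfl⟩

lemma relMap_mem_iff' {E F : Type u} {f : E → F} {θ : Rel2 E} {p : F × F} :
    p ∈ relMap f θ ↔ ∃ a b, (a, b) ∈ θ ∧ p = (f a, f b) := by
  constructor
  · rintro ⟨⟨a, b⟩, h, rfl⟩; exact ⟨a, b, h, rfl⟩
  · rintro ⟨a, b, h, rfl⟩; exact ⟨(a, b), h, rfl⟩

lemma rdom_relMap' {E F : Type u} (f : E → F) (θ : Rel2 E) :
    rdom (relMap f θ) = f '' rdom θ := by
  ext b; constructor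
  · rintro ⟨⟨u, v⟩, hm, rfl⟩
    rcases relMap_mem_iff'.1 hm with ⟨a, b', h, heq⟩
    cases heq
    exact ⟨a, mem_rdom'.2 ⟨b', h⟩, rfl⟩
  · rintro ⟨a, ha, rfl⟩
    rcases mem_rdom'.1 ha with ⟨b', h⟩
    exact mem_rdom'.2 ⟨f b', relMap_mem' h⟩

lemma rran_relMap' {E F : Type u} (f : E → F) (θ : Rel2 E) :
    rran (relMap f θ) = f '' rran θ := by
  ext b; constructor
  · rintro ⟨⟨u, v⟩, hm, rfl⟩
    rcases relMap_mem_iff'.1 hm with ⟨a, b', h, heq⟩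
    cases heq
    exact ⟨b', mem_rran'.2 ⟨a, h⟩, rfl⟩
  · rintro ⟨b', hb, rfl⟩
    rcases mem_rran'.1 hb with ⟨a, h⟩
    exact mem_rran'.2 ⟨f a, relMap_mem' h⟩

lemma rdom_symset' {E F : Type u} (f g : E → F) (x : Set E) :
    rdom {p : F × F | ∃ a ∈ x, p = (f a, g a)} = f '' x := by
  ext b; constructor
  · rintro ⟨⟨u, v⟩, ⟨a, ha, heq⟩, rfl⟩
    cases heq; exact ⟨a, ha, rfl⟩
  · rintro ⟨a, ha, rfl⟩; exact ⟨(f a, g a), ⟨a, ha, rfl⟩, rfl⟩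

lemma rran_symset' {E F : Type u} (f g : E → F) (x : Set E) :
    rran {p : F × F | ∃ a ∈ x, p = (f a, g a)} = g '' x := by
  ext b; constructor
  · rintro ⟨⟨u, v⟩, ⟨a, ha, heq⟩, rfl⟩
    cases heq; exact ⟨a, ha, rfl⟩
  · rintro ⟨a, ha, rfl⟩; exact ⟨(f a, g a), ⟨a, ha, rfl⟩, rfl⟩

/-- lifting maps and symmetry of maps to the higher symmetry. -/
theorem statement5 {EA EB : Type u} (A : ES EA) (SA : Set (Rel2 EA))
    (hSA : IsIsoFamily A SA) (B : ES EB) (SB : Set (Rel2 EB)) (hSB : IsIsoFamily B SB)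
    (f : EA → EB) (hf : IsMap A B f) (hff : FamPres SA SB f) :
    (∀ Φ ∈ HigherFam SA, relMap (Prod.map f f) Φ ∈ HigherFam SB) ∧
    (∀ g : EA → EB, IsMap A B g → FamPres SA SB g → SymMaps A SB f g →
      ∀ θ ∈ SA,
        {P : (EB × EB) × (EB × EB) | ∃ p ∈ θ, P = ((f p.1, f p.2), (g p.1, g p.2))}
          ∈ HigherFam SB) := by
  have hprops := hSA.1
  constructor
  · rintro Φ ⟨θ, hθ, θ', hθ', φ, hφ, φ', hφ', h1, h2, h3, h4, hcomm, rfl⟩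
    -- injectivity of f on rdom θ and rran θ
    have injd : ∀ a ∈ rdom θ, ∀ a' ∈ rdom θ, f a = f a' → a = a' :=
      hf.2 _ (hprops θ hθ).2.1
    have injr : ∀ a ∈ rran θ, ∀ a' ∈ rran θ, f a = f a' → a = a' :=
      hf.2 _ (hprops θ hθ).2.2
    refine ⟨relMap f θ, hff θ hθ, relMap f θ', hff θ' hθ', relMap f φ, hff φ hφ,
      relMap f φ', hff φ' hφ', by rw [rdom_relMap', rdom_relMap', h1],
      by rw [rdom_relMap', rran_relMap', h2],
      by rw [rran_relMap', rdom_relMap', h3],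
      by rw [rran_relMap', rran_relMap', h4], ?_, ?_⟩
    · rintro a b c d hab hac hbd
      rcases relMap_mem_iff'.1 hab with ⟨a₀, b₀, hab₀, heq1⟩
      rcases relMap_mem_iff'.1 hac with ⟨a₁, c₁, hac₁, heq2⟩
      rcases relMap_mem_iff'.1 hbd with ⟨b₁, d₁, hbd₁, heq3⟩
      cases heq1
      have ea : a₁ = a₀ := by
        apply injd a₁ (h1 ▸ mem_rdom'.2 ⟨c₁, hac₁⟩) a₀ (mem_rdom'.2 ⟨b₀, hab₀⟩)
        have := congrArg Prod.fst heq2; simpa using this.symm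
      have eb : b₁ = b₀ := by
        apply injr b₁ (h2 ▸ mem_rdom'.2 ⟨d₁, hbd₁⟩) b₀ (mem_rran'.2 ⟨a₀, hab₀⟩)
        have := congrArg Prod.fst heq3; simpa using this.symm
      have hc : c = f c₁ := by have := congrArg Prod.snd heq2; simpa using this
      have hd : d = f d₁ := by have := congrArg Prod.snd heq3; simpa using this
      subst hc hd
      exact relMap_mem' (hcomm a₀ b₀ c₁ d₁ hab₀ (ea ▸ hac₁) (eb ▸ hbd₁))
    · ext P
      constructor
      · rintro ⟨⟨⟨a, b⟩, ⟨c, d⟩⟩, ⟨a₀, b₀, c₀, d₀, hab, hac, hbd, heq⟩, rfl⟩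
        cases heq
        exact ⟨f a, f b, f c, f d, relMap_mem' hab, relMap_mem' hac,
          relMap_mem' hbd, rfl⟩
      · rintro ⟨a, b, c, d, hab, hac, hbd, rfl⟩
        rcases relMap_mem_iff'.1 hab with ⟨a₀, b₀, hab₀, heq1⟩
        rcases relMap_mem_iff'.1 hac with ⟨a₁, c₁, hac₁, heq2⟩
        rcases relMap_mem_iff'.1 hbd with ⟨b₁, d₁, hbd₁, heq3⟩
        cases heq1
        have ea : a₁ = a₀ := by
          apply injd a₁ (h1 ▸ mem_rdom'.2 ⟨c₁, hac₁⟩) a₀ (mem_rdom'.2 ⟨b₀, hab₀⟩)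
          have := congrArg Prod.fst heq2; simpa using this.symm
        have eb : b₁ = b₀ := by
          apply injr b₁ (h2 ▸ mem_rdom'.2 ⟨d₁, hbd₁⟩) b₀ (mem_rran'.2 ⟨a₀, hab₀⟩)
          have := congrArg Prod.fst heq3; simpa using this.symm
        have hc : c = f c₁ := by have := congrArg Prod.snd heq2; simpa using this
        have hd : d = f d₁ := by have := congrArg Prod.snd heq3; simpa using this
        subst hc hd
        exact ⟨((a₀, b₀), (c₁, d₁)),
          ⟨a₀, b₀, c₁, d₁, hab₀, ea ▸ hac₁, eb ▸ hbd₁, rfl⟩, rfl⟩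
  · intro g hg hgf hsym θ hθ
    have hxd : Config A (rdom θ) := (hprops θ hθ).2.1
    have hxr : Config A (rran θ) := (hprops θ hθ).2.2
    have injd : ∀ a ∈ rdom θ, ∀ a' ∈ rdom θ, f a = f a' → a = a' := hf.2 _ hxd
    have injr : ∀ a ∈ rran θ, ∀ a' ∈ rran θ, f a = f a' → a = a' := hf.2 _ hxr
    have hφ : {p : EB × EB | ∃ a ∈ rdom θ, p = (f a, g a)} ∈ SB := hsym _ hxd
    have hφ' : {p : EB × EB | ∃ a ∈ rran θ, p = (f a, g a)} ∈ SB := hsym _ hxr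
    refine ⟨relMap f θ, hff θ hθ, relMap g θ, hgf θ hθ,
      {p : EB × EB | ∃ a ∈ rdom θ, p = (f a, g a)}, hφ,
      {p : EB × EB | ∃ a ∈ rran θ, p = (f a, g a)}, hφ',
      by rw [rdom_symset', rdom_relMap'], by rw [rdom_symset', rran_relMap'],
      by rw [rran_symset', rdom_relMap'], by rw [rran_symset', rran_relMap'],
      ?_, ?_⟩
    · rintro a b c d hab ⟨a₁, ha₁, heq2⟩ ⟨b₁, hb₁, heq3⟩
      rcases relMap_mem_iff'.1 hab with ⟨a₀, b₀, hab₀, heq1⟩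
      cases heq1
      have ea : a₁ = a₀ := by
        apply injd a₁ ha₁ a₀ (mem_rdom'.2 ⟨b₀, hab₀⟩)
        have := congrArg Prod.fst heq2; simpa using this.symm
      have eb : b₁ = b₀ := by
        apply injr b₁ hb₁ b₀ (mem_rran'.2 ⟨a₀, hab₀⟩)
        have := congrArg Prod.fst heq3; simpa using this.symm
      have hc : c = g a₁ := by have := congrArg Prod.snd heq2; simpa using this
      have hd : d = g b₁ := by have := congrArg Prod.snd heq3; simpa using this
      subst hc hd
      rw [ea, eb]
      exact relMap_mem' hab₀
    · ext P
      constructor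
      · rintro ⟨⟨p₁, p₂⟩, hp, rfl⟩
        exact ⟨f p₁, f p₂, g p₁, g p₂, relMap_mem' hp,
          ⟨p₁, mem_rdom'.2 ⟨p₂, hp⟩, rfl⟩, ⟨p₂, mem_rran'.2 ⟨p₁, hp⟩, rfl⟩, rfl⟩
      · rintro ⟨a, b, c, d, hab, ⟨a₁, ha₁, heq2⟩, ⟨b₁, hb₁, heq3⟩, rfl⟩
        rcases relMap_mem_iff'.1 hab with ⟨a₀, b₀, hab₀, heq1⟩
        cases heq1
        have ea : a₁ = a₀ := by
          apply injd a₁ ha₁ a₀ (mem_rdom'.2 ⟨b₀, hab₀⟩)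
          have := congrArg Prod.fst heq2; simpa using this.symm
        have eb : b₁ = b₀ := by
          apply injr b₁ hb₁ b₀ (mem_rran'.2 ⟨a₀, hab₀⟩)
          have := congrArg Prod.fst heq3; simpa using this.symm
        have hc : c = g a₁ := by have := congrArg Prod.snd heq2; simpa using this
        have hd : d = g b₁ := by have := congrArg Prod.snd heq3; simpa using this
        subst hc hd
        exact ⟨(a₀, b₀), hab₀, by rw [ea, eb]⟩
end
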